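/- Let G be a finite group of order n with identity e, and let a ∈ G with a ≠ e and a³ = e. Then the coefficient of the monomial x_e^{n-3} x_a³ in the group determinant Θ(G) equals n/3 (in particular 3 divides n). -/

import Mathlib

/-!
Expanding the determinant, `Θ(G) = ∑ σ, sign σ • ∏ h, x_{σ h * h⁻¹}`. Let `k` be the order of
`a ≠ 1`. The `σ`-term is `x_e^{n-k} x_a^k` exactly when `σ h ∈ {h, a h}` for all `h`, with
`σ h = a h` for exactly `k` elements `h`. By injectivity of `σ` this set of `h` is closed under
left multiplication by `a`, so it is a single right coset `⟨a⟩ g`, on which `σ` acts as the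
`k`-cycle `h ↦ a h`. Hence the coefficient is `(-1)^(k-1)` times the number `n / k` of right
cosets of `⟨a⟩`; for `k = 3` this is `n / 3`.
-/

/-- The group determinant `Θ(G)` of a finite group `G`, as a multivariate polynomial over a
commutative ring `R` in independent commuting variables `x_g` (`g ∈ G`):
`Θ(G) = det((x_{g h⁻¹})_{g,h ∈ G})`. -/
noncomputable def groupDet (R G : Type*) [CommRing R] [Group G] [Finite G] :
    MvPolynomial G R := by
  classical
  letI := Fintype.ofFinite G
  exact Matrix.det (Matrix.of fun g h : G => MvPolynomial.X (g * h⁻¹))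

open Finset MvPolynomial Equiv Subgroup

section

variable {G : Type*} [Group G]

lemma mul_mul_inv_mem_iff {H : Subgroup G} {x : G} (hx : x ∈ H) (h g : G) :
    x * h * g⁻¹ ∈ H ↔ h * g⁻¹ ∈ H := by
  rw [mul_assoc, H.mul_mem_cancel_left hx]

noncomputable def cosetRotation (a g : G) : Perm G where
  toFun h := if h * g⁻¹ ∈ zpowers a then a * h else h
  invFun h := if h * g⁻¹ ∈ zpowers a then a⁻¹ * h else h
  left_inv h := by
    by_cases hh : h * g⁻¹ ∈ zpowers a <;> simp [hh, mul_mul_inv_mem_iff (mem_zpowers a)]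
  right_inv h := by
    by_cases hh : h * g⁻¹ ∈ zpowers a <;>
      simp [hh, mul_mul_inv_mem_iff (inv_mem (mem_zpowers a))]

lemma cosetRotation_apply (a g h : G) :
    cosetRotation a g h = if h * g⁻¹ ∈ zpowers a then a * h else h := rfl

lemma cosetRotation_pow_apply_self (a g : G) (j : ℕ) :
    (cosetRotation a g ^ j) g = a ^ j * g := by
  induction j with
  | zero => simp
  | succ j ih =>
    have hmem : a ^ j * g * g⁻¹ ∈ zpowers a := by
      rw [mul_inv_cancel_right]
      exact pow_mem (mem_zpowers a) j
    rw [pow_succ', Perm.mul_apply, ih, cosetRotation_apply, if_pos hmem, pow_succ', mul_assoc]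

lemma cosetRotation_eq_iff {a : G} (ha : a ≠ 1) (g g' : G) :
    cosetRotation a g' = cosetRotation a g ↔ g' * g⁻¹ ∈ zpowers a := by
  refine ⟨fun h => ?_, fun h => Equiv.ext fun x => ?_⟩
  · have := congr($h g')
    by_contra hg'
    simp [cosetRotation_apply, hg', ha] at this
  · have : x * g⁻¹ = x * g'⁻¹ * (g' * g⁻¹) := by group
    simp only [cosetRotation_apply, this, (zpowers a).mul_mem_cancel_right h]

lemma apply_pow_mul_of_apply_eq_mul {σ : Perm G} {a : G} (ha : a ≠ 1)
    (hσ : ∀ h, σ h = h ∨ σ h = a * h) {g : G} (hg : σ g = a * g) (j : ℕ) :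
    σ (a ^ j * g) = a * (a ^ j * g) := by
  induction j with
  | zero => simpa using hg
  | succ j ih =>
    rw [pow_succ', mul_assoc]
    refine (hσ _).resolve_left fun hfix => ha ?_
    simpa using σ.injective (hfix.trans ih.symm)

variable [Fintype G]

lemma card_filter_mul_inv_mem (H : Subgroup G) [DecidablePred (· ∈ H)] (g : G) :
    #{h | h * g⁻¹ ∈ H} = Nat.card H := by
  calc #{h | h * g⁻¹ ∈ H} = #{h | h ∈ H} :=
        card_nbij' (· * g⁻¹) (· * g) (by simp [Set.MapsTo]) (by simp [Set.MapsTo])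
          (by simp [Set.LeftInvOn]) (by simp [Set.LeftInvOn])
    _ = Nat.card H := by simp [Nat.card_eq_fintype_card, Fintype.card_subtype]

/-- The exponent vector of `∏ h, x_{σ h * h⁻¹}`, the monomial of the `σ`-term of `Θ(G)`. -/
noncomputable def displacement (σ : Perm G) : G →₀ ℕ :=
  ∑ h, Finsupp.single (σ h * h⁻¹) 1

lemma displacement_cosetRotation (a g : G) :
    displacement (cosetRotation a g) =
      Finsupp.single 1 (Fintype.card G - orderOf a) + Finsupp.single a (orderOf a) := by
  have hquot (h : G) : cosetRotation a g h * h⁻¹ = if h * g⁻¹ ∈ zpowers a then a else 1 := by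
    split_ifs with hh <;> simp [cosetRotation_apply, hh]
  have hcard := card_filter_add_card_filter_not (s := univ) (fun h => h * g⁻¹ ∈ zpowers a)
  rw [card_filter_mul_inv_mem, Nat.card_zpowers, card_univ] at hcard
  simp only [displacement, hquot, apply_ite (Finsupp.single · 1), sum_ite, sum_const,
    card_filter_mul_inv_mem, Nat.card_zpowers, Finsupp.smul_single_one]
  rw [add_comm, show #{h | h * g⁻¹ ∉ zpowers a} = Fintype.card G - orderOf a by omega]

variable [DecidableEq G]

lemma displacement_apply (σ : Perm G) (x : G) :
    displacement σ x = #{h | σ h * h⁻¹ = x} := by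
  simp [displacement, Finsupp.finsetSum_apply, Finsupp.single_apply, Finset.card_filter,
    -sum_boole]

lemma groupDet_eq_det (R : Type*) [CommRing R] :
    groupDet R G = (Matrix.of fun g h : G => (X (g * h⁻¹) : MvPolynomial G R)).det := by
  unfold groupDet
  congr!

theorem coeff_groupDet (R : Type*) [CommRing R] (m : G →₀ ℕ) :
    coeff m (groupDet R G) = ∑ σ : Perm G with displacement σ = m, ((Perm.sign σ : ℤ) : R) := by
  rw [groupDet_eq_det, Matrix.det_apply, coeff_sum, sum_filter]
  refine sum_congr rfl fun σ _ => ?_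
  have hprod : ∏ h, (X (σ h * h⁻¹) : MvPolynomial G R) = monomial (displacement σ) 1 := by
    simp only [displacement, monomial_sum_one, X]
  simp only [Matrix.of_apply, hprod, Units.smul_def, coeff_smul, coeff_monomial]
  rw [smul_ite, smul_zero, zsmul_one]

section cosetRotation

variable {a : G} (ha : a ≠ 1) (g : G)
include ha

lemma support_cosetRotation :
    (cosetRotation a g).support = ({h | h * g⁻¹ ∈ zpowers a} : Finset G) := by
  ext h
  by_cases hh : h * g⁻¹ ∈ zpowers a <;> simp [cosetRotation_apply, hh, ha]

lemma isCycle_cosetRotation : (cosetRotation a g).IsCycle := by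
  refine ⟨g, by simp [cosetRotation_apply, ha], fun h hh => ?_⟩
  rw [← Perm.mem_support, support_cosetRotation ha, mem_filter,
    ← mem_powers_iff_mem_zpowers] at hh
  obtain ⟨j, hj⟩ := hh.2
  exact ⟨j, by simp [cosetRotation_pow_apply_self, hj]⟩

lemma sign_cosetRotation : Perm.sign (cosetRotation a g) = -(-1) ^ orderOf a := by
  rw [(isCycle_cosetRotation ha g).sign, support_cosetRotation ha, card_filter_mul_inv_mem,
    Nat.card_zpowers]

end cosetRotation

variable {a : G} {σ : Perm G} {c k : ℕ}

lemma apply_eq_or_eq_mul_of_displacement_eq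
    (hσ : displacement σ = Finsupp.single 1 c + Finsupp.single a k) (h : G) :
    σ h = h ∨ σ h = a * h := by
  have hpos : displacement σ (σ h * h⁻¹) ≠ 0 := by
    rw [displacement_apply]
    exact card_ne_zero.2 ⟨h, by simp⟩
  by_contra! hne
  simp [hσ, eq_mul_inv_iff_mul_eq, hne.1.symm, hne.2.symm] at hpos

lemma exists_eq_cosetRotation_of_displacement_eq (ha : a ≠ 1)
    (hσ : displacement σ = Finsupp.single 1 c + Finsupp.single a (orderOf a)) :
    ∃ g, σ = cosetRotation a g := by
  have hdich := apply_eq_or_eq_mul_of_displacement_eq hσ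
  set T : Finset G := {h | σ h = a * h} with hT
  have hcardT : #T = orderOf a := by
    have := congr($hσ a)
    rw [displacement_apply] at this
    simpa [Finsupp.single_apply, ha.symm, mul_inv_eq_iff_eq_mul] using this
  obtain ⟨g, hg⟩ : T.Nonempty := card_pos.1 (hcardT ▸ orderOf_pos a)
  have hsub : ({h | h * g⁻¹ ∈ zpowers a} : Finset G) ⊆ T := by
    intro h hh
    rw [mem_filter, ← mem_powers_iff_mem_zpowers] at hh
    obtain ⟨j, hj⟩ := hh.2
    rw [eq_mul_inv_iff_mul_eq] at hj
    subst hj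
    simpa [hT] using apply_pow_mul_of_apply_eq_mul ha hdich (by simpa [hT] using hg) j
  have hTeq : T = ({h | h * g⁻¹ ∈ zpowers a} : Finset G) := (eq_of_subset_of_card_le hsub
    (by rw [hcardT, card_filter_mul_inv_mem, Nat.card_zpowers])).symm
  refine ⟨g, Equiv.ext fun h => ?_⟩
  rw [cosetRotation_apply]
  split_ifs with hh
  · simpa [hT] using hsub (by simpa using hh)
  · refine (hdich h).resolve_right fun hmul => hh ?_
    have : h ∈ T := by simpa [hT] using hmul
    simpa [hTeq] using this

lemma card_eq_orderOf_mul_card_filter_displacement_eq (ha : a ≠ 1) :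
    Fintype.card G = orderOf a * #{σ : Perm G |
      displacement σ = Finsupp.single 1 (Fintype.card G - orderOf a) +
        Finsupp.single a (orderOf a)} := by
  set m := Finsupp.single 1 (Fintype.card G - orderOf a) + Finsupp.single a (orderOf a)
  have hfib := card_eq_sum_card_fiberwise (f := cosetRotation a) (s := univ)
    (t := {σ | displacement σ = m}) fun g _ => by simp [m, displacement_cosetRotation]
  rw [card_univ] at hfib
  rw [hfib, sum_eq_card_nsmul fun σ hσ => ?_, smul_eq_mul, mul_comm]
  obtain ⟨g, rfl⟩ := exists_eq_cosetRotation_of_displacement_eq ha (mem_filter.1 hσ).2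
  simp only [cosetRotation_eq_iff ha, card_filter_mul_inv_mem, Nat.card_zpowers]

theorem coeff_groupDet_single_one_add_single_orderOf (R : Type*) [CommRing R] (ha : a ≠ 1) :
    coeff (Finsupp.single 1 (Fintype.card G - orderOf a) + Finsupp.single a (orderOf a))
      (groupDet R G) = -(-1) ^ orderOf a * (Fintype.card G / orderOf a : ℕ) := by
  rw [coeff_groupDet, sum_eq_card_nsmul (b := (-(-1) ^ orderOf a : R)) fun σ hσ => ?_]
  · rw [nsmul_eq_mul, mul_comm, Nat.eq_div_of_mul_eq_right (orderOf_pos a).ne'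
      (card_eq_orderOf_mul_card_filter_displacement_eq ha).symm]
  · obtain ⟨g, rfl⟩ := exists_eq_cosetRotation_of_displacement_eq ha (mem_filter.1 hσ).2
    simp [sign_cosetRotation ha]

end

/-- If `a ≠ e` and `a³ = e` in a finite group `G` of order `n`, then `3 ∣ n` and the coefficient
of the monomial `x_e^{n-3} x_a³` in the group determinant `Θ(G)` equals `n / 3`. -/
theorem coeff_groupDet_cube {G : Type*} [Group G] [Fintype G]
    (a : G) (ha : a ≠ 1) (ha3 : a ^ 3 = 1) :
    3 ∣ Fintype.card G ∧
      MvPolynomial.coeff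
        (Finsupp.single (1 : G) (Fintype.card G - 3) + Finsupp.single a 3)
        (groupDet ℂ G) = (Fintype.card G : ℂ) / 3 := by
  classical
  have h3 : orderOf a = 3 := orderOf_eq_prime ha3 ha
  have hdvd : 3 ∣ Fintype.card G := h3 ▸ orderOf_dvd_card
  refine ⟨hdvd, ?_⟩
  rw [← h3, coeff_groupDet_single_one_add_single_orderOf ℂ ha, h3,
    Nat.cast_div hdvd (by norm_num)]
  norm_num
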